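/- Let V be a vector space over ℂ, D : V → V linear, n a positive integer, J ∈ ℂ with J ≠ 0, and λ ∈ ℂ. Suppose (φ_l)_{l≥0} in V (with φ_{−1} := 0) satisfies the decoupled recurrence for all l ≥ 1. Then for every l ≥ 0, 4ˡ · l! · (n/(2J))ˡ · (λ + 3/2)_l · φ_l = p_l((n/(2J))·D²) φ_0, where p_l((n/(2J))·D²) denotes the evaluation of the polynomial p_l at the linear operator (n/(2J))·D², applied to φ_0. -/

import Mathlib

/-- Pochhammer symbol `(a)_l = a(a+1)⋯(a+l-1)`, with `(a)_0 = 1`. -/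
noncomputable def cpoch (a : ℂ) (l : ℕ) : ℂ := ∏ i ∈ Finset.range l, (a + i)

/-- The decoupled recurrence: for every `l ≥ 1`,
`2l(2λ+2l+1)·φ_l = (D² + ((2λ+2l−1)(n+2l−2)/(2n))·J + (2l(2λ+n+2l−1)/(2n))·J)·φ_{l−1}
  − ((2λ+n+2l−3)(n+2l−2)/(4n²))·J²·φ_{l−2}`, with `φ_{−1} := 0`. -/
def DecoupledRec {V : Type*} [AddCommGroup V] [Module ℂ V] (D : V →ₗ[ℂ] V)
    (n : ℕ) (J lam : ℂ) (φ : ℕ → V) : Prop :=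
  ∀ l : ℕ, 1 ≤ l →
    (2 * (l : ℂ) * (2 * lam + 2 * (l : ℂ) + 1)) • φ l
      = D (D (φ (l - 1)))
        + ((2 * lam + 2 * (l : ℂ) - 1) * ((n : ℂ) + 2 * (l : ℂ) - 2) / (2 * (n : ℂ)) * J
            + 2 * (l : ℂ) * (2 * lam + (n : ℂ) + 2 * (l : ℂ) - 1) / (2 * (n : ℂ)) * J)
            • φ (l - 1)
        - ((2 * lam + (n : ℂ) + 2 * (l : ℂ) - 3) * ((n : ℂ) + 2 * (l : ℂ) - 2)
            / (4 * (n : ℂ) ^ 2) * J ^ 2) • (if 2 ≤ l then φ (l - 2) else 0)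

/-- First-order coefficient polynomial of the recurrence defining the solution polynomials. -/
noncomputable def coeffA (n : ℕ) (lam : ℂ) (l : ℕ) : Polynomial ℂ :=
  Polynomial.X + Polynomial.C ((lam + (l : ℂ) - 1 / 2) * ((l : ℂ) + (n : ℂ) / 2 - 1)
    + (l : ℂ) * (lam + (l : ℂ) + (n : ℂ) / 2 - 1 / 2))

/-- Zeroth-order coefficient of the recurrence defining the solution polynomials. -/
noncomputable def coeffB (n : ℕ) (lam : ℂ) (l : ℕ) : ℂ :=
  ((l : ℂ) - 1) * ((l : ℂ) + (n : ℂ) / 2 - 1) * ((l : ℂ) + lam - 1 / 2)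
    * ((l : ℂ) + lam + (n : ℂ) / 2 - 3 / 2)

/-- The solution polynomials `p_l`, defined by `p_{−1} := 0`, `p_0 := 1` and
`p_l(y) = (y + (λ+l−1/2)(l+n/2−1) + l(λ+l+n/2−1/2))·p_{l−1}(y)
          − (l−1)(l+n/2−1)(l+λ−1/2)(l+λ+n/2−3/2)·p_{l−2}(y)` for `l ≥ 1`. -/
noncomputable def solPoly (n : ℕ) (lam : ℂ) : ℕ → Polynomial ℂ
  | 0 => 1
  | 1 => coeffA n lam 1
  | (l + 2) => coeffA n lam (l + 2) * solPoly n lam (l + 1)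
      - Polynomial.C (coeffB n lam (l + 2)) * solPoly n lam l

/-!
Rescaling `ψ_l := 4ˡ l! cˡ (λ+3/2)_l • φ_l` with `c = n/(2J)` absorbs the leading coefficient
`2l(2λ+2l+1)` of the decoupled recurrence, which becomes
`ψ_l = (E + a_l) ψ_{l-1} - b_l ψ_{l-2}` for `E = c • D²`, with `a_l`, `b_l` the coefficients
of the recurrence defining `p_l`. Hence `ψ_l = p_l(E) ψ_0` by two-step induction.
-/

open Polynomial

noncomputable def normFactor (c lam : ℂ) (l : ℕ) : ℂ :=
  4 ^ l * l.factorial * c ^ l * cpoch (lam + 3 / 2) l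

lemma normFactor_zero (c lam : ℂ) : normFactor c lam 0 = 1 := by
  simp [normFactor, cpoch]

lemma normFactor_succ (c lam : ℂ) (l : ℕ) :
    normFactor c lam (l + 1)
      = c * (2 * ((l + 1 : ℕ) : ℂ) * (2 * lam + 2 * ((l + 1 : ℕ) : ℂ) + 1)) * normFactor c lam l := by
  simp only [normFactor, cpoch, Finset.prod_range_succ, pow_succ, Nat.factorial_succ]
  push_cast
  ring

lemma aeval_coeffA_apply {V : Type*} [AddCommGroup V] [Module ℂ V] (E : Module.End ℂ V)
    (n : ℕ) (lam : ℂ) (l : ℕ) (v : V) :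
    aeval E (coeffA n lam l) v
      = E v + ((lam + (l : ℂ) - 1 / 2) * ((l : ℂ) + (n : ℂ) / 2 - 1)
          + (l : ℂ) * (lam + (l : ℂ) + (n : ℂ) / 2 - 1 / 2)) • v := by
  rw [coeffA, map_add, aeval_X, aeval_C, LinearMap.add_apply, Module.algebraMap_end_apply]

lemma eq_aeval_solPoly_of_rec {V : Type*} [AddCommGroup V] [Module ℂ V] (E : Module.End ℂ V)
    (n : ℕ) (lam : ℂ) (ψ : ℕ → V) (h₁ : ψ 1 = aeval E (coeffA n lam 1) (ψ 0))
    (h₂ : ∀ l, ψ (l + 2) = aeval E (coeffA n lam (l + 2)) (ψ (l + 1)) - coeffB n lam (l + 2) • ψ l) :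
    ∀ l, ψ l = aeval E (solPoly n lam l) (ψ 0) := by
  intro l
  induction l using Nat.twoStepInduction with
  | zero => simp [solPoly]
  | one => simpa [solPoly] using h₁
  | more l ih₀ ih₁ =>
    rw [h₂, ih₀, ih₁, solPoly, map_sub, map_mul, map_mul, aeval_C]
    rfl

section Scalars

variable {n : ℕ} {J : ℂ} (hn : (n : ℂ) ≠ 0) (hJ : J ≠ 0) (lam : ℂ)
include hn hJ

lemma scaled_decoupledRec_coeff_eq_coeffA_const (l : ℕ) :
    (n : ℂ) / (2 * J) * ((2 * lam + 2 * (l : ℂ) - 1) * ((n : ℂ) + 2 * (l : ℂ) - 2) / (2 * (n : ℂ)) * J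
        + 2 * (l : ℂ) * (2 * lam + (n : ℂ) + 2 * (l : ℂ) - 1) / (2 * (n : ℂ)) * J)
      = (lam + (l : ℂ) - 1 / 2) * ((l : ℂ) + (n : ℂ) / 2 - 1)
          + (l : ℂ) * (lam + (l : ℂ) + (n : ℂ) / 2 - 1 / 2) := by
  field_simp
  ring

lemma scaled_decoupledRec_coeff_eq_coeffB (l : ℕ) :
    ((n : ℂ) / (2 * J)) ^ 2 * (2 * ((l + 1 : ℕ) : ℂ) * (2 * lam + 2 * ((l + 1 : ℕ) : ℂ) + 1))
        * ((2 * lam + (n : ℂ) + 2 * ((l + 2 : ℕ) : ℂ) - 3) * ((n : ℂ) + 2 * ((l + 2 : ℕ) : ℂ) - 2)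
            / (4 * (n : ℂ) ^ 2) * J ^ 2)
      = coeffB n lam (l + 2) := by
  simp only [coeffB]
  push_cast
  field_simp
  ring

end Scalars

section Normalized

variable {V : Type*} [AddCommGroup V] [Module ℂ V] {D : V →ₗ[ℂ] V} {n : ℕ} {J lam : ℂ}
  {φ : ℕ → V}

lemma DecoupledRec.normFactor_smul_succ (h : DecoupledRec D n J lam φ) (hn : (n : ℂ) ≠ 0)
    (hJ : J ≠ 0) (m : ℕ) :
    normFactor (n / (2 * J)) lam (m + 1) • φ (m + 1)
      = aeval ((n / (2 * J)) • (D ∘ₗ D) : Module.End ℂ V) (coeffA n lam (m + 1))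
          (normFactor (n / (2 * J)) lam m • φ m)
        - (n / (2 * J) * normFactor (n / (2 * J)) lam m
            * ((2 * lam + (n : ℂ) + 2 * ((m + 1 : ℕ) : ℂ) - 3) * ((n : ℂ) + 2 * ((m + 1 : ℕ) : ℂ) - 2)
              / (4 * (n : ℂ) ^ 2) * J ^ 2)) • (if 2 ≤ m + 1 then φ (m + 1 - 2) else 0) := by
  have hm := h (m + 1) m.succ_pos
  rw [Nat.add_sub_cancel] at hm
  have hlead : normFactor (n / (2 * J)) lam (m + 1) • φ (m + 1)
      = (n / (2 * J) * normFactor (n / (2 * J)) lam m)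
          • (2 * ((m + 1 : ℕ) : ℂ) * (2 * lam + 2 * ((m + 1 : ℕ) : ℂ) + 1)) • φ (m + 1) := by
    rw [normFactor_succ, smul_smul]
    ring_nf
  rw [hlead, hm, aeval_coeffA_apply, ← scaled_decoupledRec_coeff_eq_coeffA_const hn hJ]
  simp only [LinearMap.smul_apply, LinearMap.comp_apply, map_smul]
  module

lemma DecoupledRec.normFactor_smul_one (h : DecoupledRec D n J lam φ) (hn : (n : ℂ) ≠ 0)
    (hJ : J ≠ 0) :
    normFactor (n / (2 * J)) lam 1 • φ 1
      = aeval ((n / (2 * J)) • (D ∘ₗ D) : Module.End ℂ V) (coeffA n lam 1)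
          (normFactor (n / (2 * J)) lam 0 • φ 0) := by
  simpa using h.normFactor_smul_succ hn hJ 0

lemma DecoupledRec.normFactor_smul_add_two (h : DecoupledRec D n J lam φ) (hn : (n : ℂ) ≠ 0)
    (hJ : J ≠ 0) (l : ℕ) :
    normFactor (n / (2 * J)) lam (l + 2) • φ (l + 2)
      = aeval ((n / (2 * J)) • (D ∘ₗ D) : Module.End ℂ V) (coeffA n lam (l + 2))
          (normFactor (n / (2 * J)) lam (l + 1) • φ (l + 1))
        - coeffB n lam (l + 2) • normFactor (n / (2 * J)) lam l • φ l := by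
  refine (h.normFactor_smul_succ hn hJ (l + 1)).trans ?_
  rw [if_pos (by omega), show l + 1 + 1 - 2 = l by omega, normFactor_succ,
    ← scaled_decoupledRec_coeff_eq_coeffB hn hJ lam l, smul_smul]
  congr 2
  push_cast
  ring

end Normalized

/-- Solution operators of the decoupled recurrence:
`4ˡ l! (n/(2J))ˡ (λ+3/2)_l · φ_l = p_l((n/(2J))·D²) φ_0`. -/
theorem stmt12 {V : Type*} [AddCommGroup V] [Module ℂ V] (D : V →ₗ[ℂ] V)
    (n : ℕ) (hn : 0 < n) (J : ℂ) (hJ : J ≠ 0) (lam : ℂ) (φ : ℕ → V)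
    (h : DecoupledRec D n J lam φ) :
    ∀ l : ℕ,
      ((4 : ℂ) ^ l * (l.factorial : ℂ) * ((n : ℂ) / (2 * J)) ^ l * cpoch (lam + 3 / 2) l) • φ l
        = (Polynomial.aeval ((((n : ℂ) / (2 * J)) • (D ∘ₗ D) : Module.End ℂ V))
            (solPoly n lam l)) (φ 0) := by
  have hn' : (n : ℂ) ≠ 0 := Nat.cast_ne_zero.mpr hn.ne'
  intro l
  have key := eq_aeval_solPoly_of_rec _ n lam (fun l ↦ normFactor (n / (2 * J)) lam l • φ l)
    (h.normFactor_smul_one hn' hJ) (h.normFactor_smul_add_two hn' hJ) l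
  rwa [normFactor_zero, one_smul] at key
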